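/- Let H be a finite group. Every integer group determinant of (ZMod 2) × H is an integer group determinant of H; that is, S((ZMod 2) × H) ⊆ S(H). -/
import Mathlib


/-- The group determinant of `a : G → R`: the determinant of the `|G| × |G|` matrix
whose `(g, h)` entry is `a (g * h⁻¹)`. -/
noncomputable def groupDet {G : Type*} [Group G] [Fintype G] [DecidableEq G]
    {R : Type*} [CommRing R] (a : G → R) : R :=
  Matrix.det (Matrix.of fun g h : G => a (g * h⁻¹))

/-- The set of integer group determinants of a finite group `G`. -/
def detSet (G : Type*) [Group G] [Fintype G] [DecidableEq G] : Set ℤ :=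
  {d : ℤ | ∃ a : G → ℤ, groupDet a = d}

/-- Convolution of two maps on a group. -/
def convMap {G : Type*} [Group G] [Fintype G] (u v : G → ℤ) : G → ℤ :=
  fun x => ∑ y, u y * v (y⁻¹ * x)

lemma groupDet_conv {G : Type*} [Group G] [Fintype G] [DecidableEq G]
    (u v : G → ℤ) : groupDet (convMap u v) = groupDet u * groupDet v := by
  unfold groupDet
  rw [← Matrix.det_mul]
  congr 1
  ext g h
  simp only [Matrix.mul_apply, Matrix.of_apply, convMap]
  refine (Fintype.sum_equiv ((Equiv.inv G).trans (Equiv.mulLeft g))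
    (fun k => u (g * k⁻¹) * v (k * h⁻¹))
    (fun y => u y * v (y⁻¹ * (g * h⁻¹))) fun k => ?_).symm
  simp only [Equiv.trans_apply, Equiv.inv_apply, Equiv.coe_mulLeft]
  congr 1
  congr 1
  group

lemma det_block {n : Type*} [Fintype n] [DecidableEq n] (A B : Matrix n n ℤ) :
    (Matrix.fromBlocks A B B A).det = (A + B).det * (A - B).det := by
  have h : (Matrix.fromBlocks 1 1 0 1 : Matrix (n ⊕ n) (n ⊕ n) ℤ) *
      Matrix.fromBlocks A B B A * Matrix.fromBlocks 1 (-1) 0 1 =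
      Matrix.fromBlocks (A + B) 0 B (A - B) := by
    rw [Matrix.fromBlocks_multiply, Matrix.fromBlocks_multiply, Matrix.fromBlocks_inj]
    refine ⟨by noncomm_ring, by noncomm_ring, by noncomm_ring, by noncomm_ring⟩
  have hd := congrArg Matrix.det h
  rw [Matrix.det_mul, Matrix.det_mul] at hd
  simp only [Matrix.det_fromBlocks_zero₂₁, Matrix.det_fromBlocks_zero₁₂,
    Matrix.det_one, one_mul, mul_one] at hd
  exact hd

lemma z2_inv : (Multiplicative.ofAdd (1 : ZMod 2))⁻¹ = Multiplicative.ofAdd 1 := by decide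

lemma z2_sq : Multiplicative.ofAdd (1 : ZMod 2) * Multiplicative.ofAdd 1 = 1 := by decide

/-- The reindexing equivalence. -/
def z2Equiv (H : Type*) : (H ⊕ H) ≃ (Multiplicative (ZMod 2) × H) where
  toFun := Sum.elim (fun h => (Multiplicative.ofAdd 0, h))
    (fun h => (Multiplicative.ofAdd 1, h))
  invFun p := if p.1 = Multiplicative.ofAdd 0 then Sum.inl p.2 else Sum.inr p.2
  left_inv := by rintro (h | h) <;> simp
  right_inv := by
    rintro ⟨i, h⟩
    have hi : i = Multiplicative.ofAdd 0 ∨ i = Multiplicative.ofAdd 1 := by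
      revert i; decide
    rcases hi with hi | hi <;> subst hi <;> simp

theorem detSet_Z2_prod_subset (H : Type*) [Group H] [Fintype H] [DecidableEq H] :
    detSet (Multiplicative (ZMod 2) × H) ⊆ detSet H := by
  rintro d ⟨a, rfl⟩
  set f : H → ℤ := fun h => a (Multiplicative.ofAdd 0, h) with hf
  set g : H → ℤ := fun h => a (Multiplicative.ofAdd 1, h) with hg
  refine ⟨convMap (f + g) (f - g), ?_⟩
  rw [groupDet_conv]
  set A : Matrix H H ℤ := Matrix.of fun x y : H => f (x * y⁻¹) with hA
  set B : Matrix H H ℤ := Matrix.of fun x y : H => g (x * y⁻¹) with hB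
  have h1 : groupDet (f + g) = (A + B).det := by
    unfold groupDet; congr 1
  have h2 : groupDet (f - g) = (A - B).det := by
    unfold groupDet; congr 1
  rw [h1, h2, ← det_block]
  unfold groupDet
  rw [← Matrix.det_submatrix_equiv_self (z2Equiv H)]
  congr 1
  ext i j
  rcases i with i | i <;> rcases j with j | j <;>
    · simp only [Matrix.submatrix_apply, Matrix.of_apply, z2Equiv, Equiv.coe_fn_mk,
        Sum.elim_inl, Sum.elim_inr, Matrix.fromBlocks, hA, hB, hf, hg,
        Prod.inv_mk, Prod.mk_mul_mk, ofAdd_zero, z2_inv, z2_sq, one_mul, mul_one, inv_one]
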